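/- Suppose the data set X^n in ℝ^p (with n > p ≥ 1) is in general position. Let X_l be a sample point with D(X_l) = λ*, and let u₀ be a nonzero vector attaining the depth at X_l, i.e. #{i : ⟨u₀, X_i⟩ ≤ ⟨u₀, X_l⟩} = n·λ*. Then the open halfspace H(X_l, u₀) = {x ∈ ℝ^p : ⟨u₀, x⟩ < ⟨u₀, X_l⟩} is disjoint from the Tukey median region M: every z with ⟨u₀, z⟩ < ⟨u₀, X_l⟩ satisfies D(z) < λ*. -/

import Mathlib

open scoped RealInnerProductSpace

/-- Number of data points in the closed halfspace `{y : ⟪u, y⟫ ≤ ⟪u, x⟫}`. -/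
noncomputable def depthCount {p n : ℕ} (X : Fin n → EuclideanSpace ℝ (Fin p))
    (u x : EuclideanSpace ℝ (Fin p)) : ℕ :=
  Nat.card {i : Fin n // ⟪u, X i⟫ ≤ ⟪u, x⟫}

/-- Tukey (halfspace) depth of `x` with respect to the data set `X`:
`(1/n) · inf` over nonzero `u` of the number of data points `i` with `⟪u, X i⟫ ≤ ⟪u, x⟫`. -/
noncomputable def tukeyDepth {p n : ℕ} (X : Fin n → EuclideanSpace ℝ (Fin p))
    (x : EuclideanSpace ℝ (Fin p)) : ℝ :=
  (sInf {k : ℕ | ∃ u : EuclideanSpace ℝ (Fin p), u ≠ 0 ∧ k = depthCount X u x} : ℕ) / n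

/-- Maximum Tukey depth `λ* = sup_x D(x)`. -/
noncomputable def maxDepth {p n : ℕ} (X : Fin n → EuclideanSpace ℝ (Fin p)) : ℝ :=
  ⨆ x, tukeyDepth X x

/-- Tukey median region `M = {x : D(x) = λ*}`. -/
def medianRegion {p n : ℕ} (X : Fin n → EuclideanSpace ℝ (Fin p)) :
    Set (EuclideanSpace ℝ (Fin p)) :=
  {x | tukeyDepth X x = maxDepth X}

/-- The data set is in general position: every affine hyperplane
(set of the form `{y : ⟪u, y⟫ = c}` with `u ≠ 0`) contains at most `p` of the points. -/
def InGeneralPosition {p n : ℕ} (X : Fin n → EuclideanSpace ℝ (Fin p)) : Prop :=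
  ∀ u : EuclideanSpace ℝ (Fin p), u ≠ 0 → ∀ c : ℝ,
    Nat.card {i : Fin n // ⟪u, X i⟫ = c} ≤ p

/-! Moving the base point from `X l` into the open halfspace `⟪u₀, z⟫ < ⟪u₀, X l⟫` drops `X l`
itself from the closed halfspace in direction `u₀`, so the count in that direction falls strictly
below `n λ*`; the depth at `z` is bounded by this count. -/

section

variable {p n : ℕ} (X : Fin n → EuclideanSpace ℝ (Fin p))

theorem tukeyDepth_le_depthCount_div {u : EuclideanSpace ℝ (Fin p)} (hu : u ≠ 0)
    (x : EuclideanSpace ℝ (Fin p)) : tukeyDepth X x ≤ depthCount X u x / n := by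
  unfold tukeyDepth
  gcongr
  exact Nat.sInf_le ⟨u, hu, rfl⟩

theorem depthCount_lt_depthCount {u y z : EuclideanSpace ℝ (Fin p)} (i : Fin n)
    (hzi : ⟪u, z⟫ < ⟪u, X i⟫) (hiy : ⟪u, X i⟫ ≤ ⟪u, y⟫) :
    depthCount X u z < depthCount X u y := by
  have hsub : {j | ⟪u, X j⟫ ≤ ⟪u, z⟫} ⊂ {j | ⟪u, X j⟫ ≤ ⟪u, y⟫} :=
    Set.ssubset_iff_of_subset (fun j hj => le_trans hj (hzi.le.trans hiy)) |>.mpr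
      ⟨i, hiy, not_le.mpr hzi⟩
  exact Set.ncard_lt_ncard hsub

end

theorem open_halfspace_disjoint_medianRegion_general {p n : ℕ}
    (X : Fin n → EuclideanSpace ℝ (Fin p))
    (l : Fin n)
    (u₀ : EuclideanSpace ℝ (Fin p)) (hu₀ : u₀ ≠ 0)
    (hatt : (Nat.card {i : Fin n // ⟪u₀, X i⟫ ≤ ⟪u₀, X l⟫} : ℝ) = (n : ℝ) * maxDepth X) :
    ∀ z : EuclideanSpace ℝ (Fin p), ⟪u₀, z⟫ < ⟪u₀, X l⟫ → tukeyDepth X z < maxDepth X := by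
  intro z hz
  have hn : (0 : ℝ) < n := Nat.cast_pos.mpr l.pos
  calc tukeyDepth X z ≤ depthCount X u₀ z / n := tukeyDepth_le_depthCount_div X hu₀ z
    _ < depthCount X u₀ (X l) / n := by
      gcongr
      exact depthCount_lt_depthCount X l hz le_rfl
    _ = maxDepth X := by
      rw [depthCount, hatt]
      field_simp

/-- If the sample point `X_l` attains the maximum depth, and the nonzero direction `u₀`
attains the depth at `X_l`, then the open halfspace `{x : ⟪u₀, x⟫ < ⟪u₀, X_l⟫}` is
disjoint from the median region: every point of it has depth `< λ*`. -/
theorem open_halfspace_disjoint_medianRegion {p n : ℕ} (hp : 1 ≤ p) (hn : p < n)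
    (X : Fin n → EuclideanSpace ℝ (Fin p))
    (hgp : InGeneralPosition X)
    (l : Fin n) (hl : tukeyDepth X (X l) = maxDepth X)
    (u₀ : EuclideanSpace ℝ (Fin p)) (hu₀ : u₀ ≠ 0)
    (hatt : (Nat.card {i : Fin n // ⟪u₀, X i⟫ ≤ ⟪u₀, X l⟫} : ℝ) = (n : ℝ) * maxDepth X) :
    ∀ z : EuclideanSpace ℝ (Fin p), ⟪u₀, z⟫ < ⟪u₀, X l⟫ → tukeyDepth X z < maxDepth X :=
  open_halfspace_disjoint_medianRegion_general X l u₀ hu₀ hatt
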